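/- arXiv:2208.13998 — 4 statements merged into one kernel-verified Lean document; each statement's English description precedes it below -/
import Mathlib

section
/- Let β ∈ [0, 1/2), T > 0, k ∈ ℕ, and let v : [0,T] → ℝ^k be continuous. Define v̂(τ, ξ) = ∫_{max(τ,ξ)}^{T} v(η) / ((η - τ)^β (η - ξ)^β) dη for τ, ξ ∈ [0,T]. Then v̂ is uniformly continuous on [0,T]²; more precisely, there exists a modulus of continuity ω (depending only on β and T) such that ‖v̂(τ', ξ') - v̂(τ, ξ)‖ ≤ ‖v‖_∞ · ω(|τ' - τ| + |ξ' - ξ|) for all τ, τ', ξ, ξ' ∈ [0,T]. -/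
/-!
Write `K_{τξ}(η) = (η - τ)^(-β) (η - ξ)^(-β)`. Since `v̂` is symmetric it suffices to move one
variable, from `τ` to `τ' = τ + δ`. Put `a = max τ ξ` and `a' = max τ' ξ ≤ a + δ`. The difference
`v̂(τ', ξ) - v̂(τ, ξ)` splits into integrals over `[a, a']` and `[a', a' + δ]`, each at most
`‖v‖_∞ δ^(1-2β) / (1-2β)` because `K_{τξ}(η) ≤ (η - a)^(-2β)`, plus the integral of
`(K_{τ'ξ} - K_{τξ}) v` over `[a' + δ, T]`, where Bernoulli's inequality gives
`0 ≤ K_{τ'ξ} - K_{τξ} ≤ β δ (η - a')^(-2β-1)`, whose integral is at most `‖v‖_∞ δ^(1-2β) / 2`.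
So `v̂` is `(1-2β)`-Hölder in each variable and `ω(δ) = 8 δ^(1-2β) / (1-2β)` works.
-/

open MeasureTheory Set

theorem Real.rpow_neg_sub_rpow_neg_le {β x y : ℝ} (hβ0 : 0 ≤ β) (hβ1 : β ≤ 1) (hy : 0 < y)
    (hyx : y ≤ x) : y ^ (-β) - x ^ (-β) ≤ β * (x - y) * y ^ (-β - 1) := by
  set t := x / y with ht_def
  have ht : 1 ≤ t := (one_le_div hy).2 hyx
  have ht0 : 0 < t := one_pos.trans_le ht
  have bernoulli : t ^ β ≤ 1 + β * (t - 1) := by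
    simpa using rpow_one_add_le_one_add_mul_self (s := t - 1) (by linarith) hβ0 hβ1
  have hinv : 1 - t ^ (-β) ≤ β * (t - 1) := by
    have hpos : 0 < t ^ β := Real.rpow_pos_of_pos ht0 β
    rw [Real.rpow_neg ht0.le]
    nlinarith [mul_inv_cancel₀ hpos.ne', sq_nonneg (t ^ β - 1), Real.one_le_rpow ht hβ0]
  have hx : x ^ (-β) = y ^ (-β) * t ^ (-β) := by
    rw [← Real.mul_rpow hy.le (by positivity), mul_div_cancel₀ _ hy.ne']
  calc y ^ (-β) - x ^ (-β) = y ^ (-β) * (1 - t ^ (-β)) := by rw [hx]; ring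
    _ ≤ y ^ (-β) * (β * (t - 1)) := by gcongr
    _ = β * (x - y) * y ^ (-β - 1) := by
      rw [Real.rpow_sub_one hy.ne', ht_def]; field_simp

noncomputable section

def singularKernel (β τ ξ η : ℝ) : ℝ := (η - τ) ^ (-β) * (η - ξ) ^ (-β)

/-- `v̂(τ, ξ)`. -/
def singularTransform {E : Type*} [NormedAddCommGroup E] [NormedSpace ℝ E]
    (β T : ℝ) (v : ℝ → E) (τ ξ : ℝ) : E :=
  ∫ η in (max τ ξ)..T, singularKernel β τ ξ η • v η

end

open intervalIntegral
open scoped Interval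

section

variable {β τ τ' ξ a a' c δ η : ℝ}

theorem singularKernel_comm : singularKernel β τ ξ = singularKernel β ξ τ := by
  ext η; exact mul_comm _ _

theorem singularKernel_nonneg (hτ : τ ≤ η) (hξ : ξ ≤ η) : 0 ≤ singularKernel β τ ξ η :=
  mul_nonneg (Real.rpow_nonneg (by linarith) _) (Real.rpow_nonneg (by linarith) _)

theorem singularKernel_le (hβ : 0 ≤ β) (hτ : τ ≤ a) (hξ : ξ ≤ a) (hη : a < η) :
    singularKernel β τ ξ η ≤ (η - a) ^ (-(2 * β)) := by
  have ha : 0 < η - a := by linarith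
  have hτa : (η - τ) ^ (-β) ≤ (η - a) ^ (-β) :=
    Real.rpow_le_rpow_of_nonpos ha (by linarith) (by linarith)
  have hξa : (η - ξ) ^ (-β) ≤ (η - a) ^ (-β) :=
    Real.rpow_le_rpow_of_nonpos ha (by linarith) (by linarith)
  calc singularKernel β τ ξ η ≤ (η - a) ^ (-β) * (η - a) ^ (-β) :=
        mul_le_mul hτa hξa (Real.rpow_nonneg (by linarith) _) (Real.rpow_nonneg ha.le _)
    _ = (η - a) ^ (-(2 * β)) := by rw [← Real.rpow_add ha]; ring_nf

theorem continuousOn_singularKernel (hτ : τ ≤ a) (hξ : ξ ≤ a) :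
    ContinuousOn (singularKernel β τ ξ) (Ioi a) := by
  refine ContinuousOn.mul ?_ ?_ <;>
  refine (continuousOn_id.sub continuousOn_const).rpow_const fun η hη => Or.inl ?_ <;>
  exact (sub_pos.2 (lt_of_le_of_lt ‹_› hη)).ne'

theorem singularKernel_sub_singularKernel_le (hβ0 : 0 ≤ β) (hβ1 : β ≤ 1) (hττ' : τ ≤ τ')
    (hτ' : τ' ≤ a) (hξ : ξ ≤ a) (hη : a < η) :
    singularKernel β τ' ξ η - singularKernel β τ ξ η ≤
      β * (τ' - τ) * (η - a) ^ (-(2 * β) - 1) := by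
  have ha : 0 < η - a := by linarith
  have hbern := Real.rpow_neg_sub_rpow_neg_le hβ0 hβ1 (by linarith : 0 < η - τ')
    (by linarith : η - τ' ≤ η - τ)
  rw [sub_sub_sub_cancel_left] at hbern
  calc singularKernel β τ' ξ η - singularKernel β τ ξ η
      = ((η - τ') ^ (-β) - (η - τ) ^ (-β)) * (η - ξ) ^ (-β) := by unfold singularKernel; ring
    _ ≤ (β * (τ' - τ) * (η - a) ^ (-β - 1)) * (η - a) ^ (-β) := by
      have hξa : (η - ξ) ^ (-β) ≤ (η - a) ^ (-β) :=
        Real.rpow_le_rpow_of_nonpos ha (by linarith) (by linarith)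
      have hτ'a : (η - τ') ^ (-β - 1) ≤ (η - a) ^ (-β - 1) :=
        Real.rpow_le_rpow_of_nonpos ha (by linarith) (by linarith)
      refine mul_le_mul (hbern.trans ?_) hξa (Real.rpow_nonneg (by linarith) _) ?_
      · gcongr
      · have := sub_nonneg.2 hττ'
        positivity
    _ = β * (τ' - τ) * (η - a) ^ (-(2 * β) - 1) := by
      rw [mul_assoc, ← Real.rpow_add ha]; ring_nf

theorem singularKernel_le_singularKernel (hβ : 0 ≤ β) (hττ' : τ ≤ τ') (hτ' : τ' < η)
    (hξ : ξ ≤ η) : singularKernel β τ ξ η ≤ singularKernel β τ' ξ η :=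
  mul_le_mul_of_nonneg_right
    (Real.rpow_le_rpow_of_nonpos (by linarith) (by linarith) (by linarith))
    (Real.rpow_nonneg (by linarith) _)

theorem integral_sub_rpow {r : ℝ} (a c b : ℝ)
    (h : -1 < r ∨ r ≠ -1 ∧ (0 : ℝ) ∉ [[c - a, b - a]]) :
    ∫ η in c..b, (η - a) ^ r = ((b - a) ^ (r + 1) - (c - a) ^ (r + 1)) / (r + 1) := by
  rw [integral_comp_sub_right (fun x => x ^ r), integral_rpow h]

theorem intervalIntegrable_sub_rpow {r : ℝ} (hr : -1 < r) (a b : ℝ) :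
    IntervalIntegrable (fun η => (η - a) ^ r) volume a b := by
  simpa using (intervalIntegrable_rpow' hr (a := a - a) (b := b - a)).comp_sub_right a

section

variable {E : Type*} [NormedAddCommGroup E] [NormedSpace ℝ E] {v : ℝ → E} {b M : ℝ}

theorem norm_singularKernel_smul_le (hβ : 0 ≤ β) (hτ : τ ≤ a) (hξ : ξ ≤ a) (hη : a < η)
    (hM : ‖v η‖ ≤ M) : ‖singularKernel β τ ξ η • v η‖ ≤ M * (η - a) ^ (-(2 * β)) := by
  rw [norm_smul, Real.norm_of_nonneg (singularKernel_nonneg (by linarith) (by linarith)),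
    mul_comm M]
  exact mul_le_mul (singularKernel_le hβ hτ hξ hη) hM (norm_nonneg _)
    (Real.rpow_nonneg (by linarith) _)

theorem intervalIntegrable_singularKernel_smul (hβ0 : 0 ≤ β) (hβ2 : 2 * β < 1) (hτ : τ ≤ a)
    (hξ : ξ ≤ a) (hab : a ≤ b) (hv : ContinuousOn v (Icc a b)) :
    IntervalIntegrable (fun η => singularKernel β τ ξ η • v η) volume a b := by
  obtain ⟨M, hM⟩ := isCompact_Icc.exists_bound_of_continuousOn hv
  have hdom := (intervalIntegrable_sub_rpow (r := -(2 * β)) (by linarith) a b).const_mul M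
  refine hdom.mono_fun' ?_ ?_
  · rw [uIoc_of_le hab]
    exact ((continuousOn_singularKernel hτ hξ).mono Ioc_subset_Ioi_self).smul
      (hv.mono Ioc_subset_Icc_self) |>.aestronglyMeasurable measurableSet_Ioc
  · rw [uIoc_of_le hab]
    filter_upwards [ae_restrict_mem measurableSet_Ioc] with η hη
    exact norm_singularKernel_smul_le hβ0 hτ hξ hη.1 (hM η (Ioc_subset_Icc_self hη))

theorem norm_integral_singularKernel_smul_le (hβ0 : 0 ≤ β) (hβ2 : 2 * β < 1) (hτ : τ ≤ a)
    (hξ : ξ ≤ a) (hab : a ≤ b) (hδ : b - a ≤ δ) (hM : ∀ η ∈ Ioc a b, ‖v η‖ ≤ M) (hM0 : 0 ≤ M) :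
    ‖∫ η in a..b, singularKernel β τ ξ η • v η‖ ≤ M * δ ^ (1 - 2 * β) / (1 - 2 * β) := by
  have hint := (intervalIntegrable_sub_rpow (by linarith : -1 < -(2 * β)) a b).const_mul M
  calc ‖∫ η in a..b, singularKernel β τ ξ η • v η‖ ≤ ∫ η in a..b, M * (η - a) ^ (-(2 * β)) :=
        norm_integral_le_of_norm_le hab (Filter.Eventually.of_forall fun η hη =>
          norm_singularKernel_smul_le hβ0 hτ hξ hη.1 (hM η hη)) hint
    _ = M * (b - a) ^ (1 - 2 * β) / (1 - 2 * β) := by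
        rw [intervalIntegral.integral_const_mul, integral_sub_rpow a a b (Or.inl (by linarith)),
          sub_self, Real.zero_rpow (by linarith), sub_zero, mul_div_assoc]
        ring_nf
    _ ≤ M * δ ^ (1 - 2 * β) / (1 - 2 * β) := by gcongr

theorem norm_integral_singularKernel_smul_sub_singularKernel_smul_le (hβ0 : 0 ≤ β)
    (hβ2 : 2 * β < 1) (hττ' : τ < τ') (hτ' : τ' ≤ a) (hξ : ξ ≤ a) (hc : a + (τ' - τ) ≤ c)
    (hcb : c ≤ b) (hM : ∀ η ∈ Ioc c b, ‖v η‖ ≤ M) (hM0 : 0 ≤ M) :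
    ‖∫ η in c..b, singularKernel β τ' ξ η • v η - singularKernel β τ ξ η • v η‖ ≤
      M * (τ' - τ) ^ (1 - 2 * β) / 2 := by
  set δ := τ' - τ
  have hδ : 0 < δ := sub_pos.2 hττ'
  rcases hβ0.eq_or_lt with rfl | hβ
  · simp only [singularKernel, neg_zero, Real.rpow_zero, sub_self,
      intervalIntegral.integral_zero, norm_zero]
    positivity
  have hpole : (0 : ℝ) ∉ [[c - a, b - a]] := notMem_uIcc_of_lt (by linarith) (by linarith)
  have hint : IntervalIntegrable (fun η => M * (β * δ) * (η - a) ^ (-(2 * β) - 1))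
      volume c b := by
    simpa using ((intervalIntegral.intervalIntegrable_rpow (r := -(2 * β) - 1)
      (Or.inr hpole)).comp_sub_right a).const_mul (M * (β * δ))
  have hbound : ∀ η ∈ Ioc c b, ‖singularKernel β τ' ξ η • v η - singularKernel β τ ξ η • v η‖ ≤
      M * (β * δ) * (η - a) ^ (-(2 * β) - 1) := by
    intro η hη
    have haη : a < η := by linarith [hη.1]
    have hmono := singularKernel_le_singularKernel hβ0 hττ'.le (by linarith) (by linarith : ξ ≤ η)
    rw [← sub_smul, norm_smul, Real.norm_of_nonneg (sub_nonneg.2 hmono), mul_comm, mul_assoc]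
    exact mul_le_mul (hM η hη)
      (singularKernel_sub_singularKernel_le hβ0 (by linarith) hττ'.le hτ' hξ haη)
      (sub_nonneg.2 hmono) hM0
  refine (norm_integral_le_of_norm_le hcb (Filter.Eventually.of_forall hbound) hint).trans ?_
  rw [intervalIntegral.integral_const_mul, integral_sub_rpow a c b (Or.inr ⟨by linarith, hpole⟩)]
  calc M * (β * δ) * (((b - a) ^ (-(2 * β) - 1 + 1) - (c - a) ^ (-(2 * β) - 1 + 1)) /
        (-(2 * β) - 1 + 1))
      = M * δ * ((c - a) ^ (-(2 * β)) - (b - a) ^ (-(2 * β))) / 2 := by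
        rw [sub_add_cancel]; field_simp; ring
    _ ≤ M * δ * δ ^ (-(2 * β)) / 2 := by
        have hb : 0 ≤ (b - a) ^ (-(2 * β)) := Real.rpow_nonneg (by linarith) _
        have hc : (c - a) ^ (-(2 * β)) ≤ δ ^ (-(2 * β)) :=
          Real.rpow_le_rpow_of_nonpos hδ (by linarith) (by linarith)
        gcongr
        linarith
    _ = M * δ ^ (1 - 2 * β) / 2 := by
        rw [mul_assoc, ← Real.rpow_one_add' hδ.le (by linarith)]; ring_nf

theorem integral_sub_integral_eq_add_integral_sub {f g : ℝ → E} {a a' m b : ℝ}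
    (hf₁ : IntervalIntegrable f volume a a') (hf₂ : IntervalIntegrable f volume a' m)
    (hf₃ : IntervalIntegrable f volume m b) (hg₂ : IntervalIntegrable g volume a' m)
    (hg₃ : IntervalIntegrable g volume m b) :
    (∫ x in a'..b, g x) - ∫ x in a..b, f x =
      ((∫ x in a'..m, g x) - (∫ x in a'..m, f x) - ∫ x in a..a', f x) +
        ∫ x in m..b, g x - f x := by
  rw [integral_sub hg₃ hf₃, ← integral_add_adjacent_intervals hg₂ hg₃,
    ← integral_add_adjacent_intervals hf₁ (hf₂.trans hf₃),
    ← integral_add_adjacent_intervals hf₂ hf₃]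
  abel

variable {T : ℝ}

theorem singularTransform_comm (τ ξ : ℝ) :
    singularTransform β T v τ ξ = singularTransform β T v ξ τ := by
  rw [singularTransform, singularTransform, max_comm, singularKernel_comm]

theorem norm_integral_singularKernel_smul_sub_integral_le (hβ0 : 0 ≤ β) (hβ2 : 2 * β < 1)
    (hv : ContinuousOn v (Icc 0 T)) (hM : ∀ η ∈ Icc 0 T, ‖v η‖ ≤ M) (hM0 : 0 ≤ M)
    (hττ' : τ < τ') (hτa : τ ≤ a) (hξa : ξ ≤ a) (hτ'a' : τ' ≤ a') (hξa' : ξ ≤ a')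
    (ha : 0 ≤ a) (haa' : a ≤ a') (ha'a : a' ≤ a + (τ' - τ)) (ha'T : a' ≤ T) :
    ‖(∫ η in a'..T, singularKernel β τ' ξ η • v η) - ∫ η in a..T, singularKernel β τ ξ η • v η‖ ≤
      4 / (1 - 2 * β) * M * (τ' - τ) ^ (1 - 2 * β) := by
  set δ := τ' - τ
  set p := 1 - 2 * β
  set m := min (a' + δ) T
  have ha'm : a' ≤ m := le_min (by linarith) ha'T
  have hmT : m ≤ T := min_le_right _ _
  have hma' : m - a' ≤ δ := by linarith [min_le_left (a' + δ) T]
  have hMI : ∀ c d, 0 ≤ c → d ≤ T → ∀ η ∈ Ioc c d, ‖v η‖ ≤ M :=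
    fun c d hc hd η hη => hM η ⟨hc.trans hη.1.le, hη.2.trans hd⟩
  have hint : ∀ σ c d, σ ≤ c → ξ ≤ c → 0 ≤ c → c ≤ d → d ≤ T →
      IntervalIntegrable (fun η => singularKernel β σ ξ η • v η) volume c d :=
    fun σ c d hσ hξc hc hcd hd => intervalIntegrable_singularKernel_smul hβ0 hβ2 hσ hξc hcd
      (hv.mono (Icc_subset_Icc hc hd))
  have tail : ‖∫ η in m..T, singularKernel β τ' ξ η • v η - singularKernel β τ ξ η • v η‖ ≤
      M * δ ^ p / 2 := by
    by_cases h : a' + δ ≤ T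
    · rw [show m = a' + δ from min_eq_left h]
      exact norm_integral_singularKernel_smul_sub_singularKernel_smul_le hβ0 hβ2 hττ' hτ'a' hξa'
        le_rfl h (hMI _ _ (by linarith) le_rfl) hM0
    · rw [show m = T from min_eq_right (not_le.1 h).le, integral_same, norm_zero]
      positivity
  rw [integral_sub_integral_eq_add_integral_sub (hint τ a a' hτa hξa ha haa' ha'T)
    (hint τ a' m (hτa.trans haa') hξa' (ha.trans haa') ha'm hmT)
    (hint τ m T (by linarith) (by linarith) (by linarith) hmT le_rfl)
    (hint τ' a' m hτ'a' hξa' (ha.trans haa') ha'm hmT)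
    (hint τ' m T (by linarith) (by linarith) (by linarith) hmT le_rfl)]
  have h1 := norm_integral_singularKernel_smul_le hβ0 hβ2 hτ'a' hξa' ha'm hma'
    (hMI _ _ (ha.trans haa') hmT) hM0
  have h2 := norm_integral_singularKernel_smul_le hβ0 hβ2 (hτa.trans haa') hξa' ha'm hma'
    (hMI _ _ (ha.trans haa') hmT) hM0
  have h3 := norm_integral_singularKernel_smul_le hβ0 hβ2 hτa hξa haa' (by linarith : a' - a ≤ δ)
    (hMI _ _ ha ha'T) hM0
  have hhalf : M * δ ^ p / 2 ≤ M * δ ^ p / p := by gcongr; linarith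
  calc _ ≤ M * δ ^ p / p + M * δ ^ p / p + M * δ ^ p / p + M * δ ^ p / 2 :=
        (norm_add_le _ _).trans (add_le_add ((norm_sub_le _ _).trans (add_le_add
          ((norm_sub_le _ _).trans (add_le_add h1 h2)) h3)) tail)
    _ ≤ 4 / p * M * δ ^ p := by
        rw [show 4 / p * M * δ ^ p = 4 * (M * δ ^ p / p) by ring]; linarith

theorem norm_singularTransform_sub_le_of_le (hβ0 : 0 ≤ β) (hβ2 : 2 * β < 1)
    (hv : ContinuousOn v (Icc 0 T)) (hM : ∀ η ∈ Icc 0 T, ‖v η‖ ≤ M) (hτ : τ ∈ Icc 0 T)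
    (hτ' : τ' ∈ Icc 0 T) (hξ : ξ ∈ Icc 0 T) (hττ' : τ ≤ τ') :
    ‖singularTransform β T v τ' ξ - singularTransform β T v τ ξ‖ ≤
      4 / (1 - 2 * β) * M * (τ' - τ) ^ (1 - 2 * β) := by
  rcases hττ'.eq_or_lt with rfl | hlt
  · simp [Real.zero_rpow (by linarith : 1 - 2 * β ≠ 0)]
  exact norm_integral_singularKernel_smul_sub_integral_le hβ0 hβ2 hv hM
    ((norm_nonneg _).trans (hM τ hτ)) hlt (le_max_left _ _) (le_max_right _ _)
    (le_max_left _ _) (le_max_right _ _)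
    (hτ.1.trans (le_max_left _ _)) (max_le_max hττ' le_rfl)
    (max_le (by linarith [le_max_left τ ξ]) (by linarith [le_max_right τ ξ]))
    (max_le hτ'.2 hξ.2)

theorem norm_singularTransform_sub_le (hβ0 : 0 ≤ β) (hβ2 : 2 * β < 1)
    (hv : ContinuousOn v (Icc 0 T)) (hM : ∀ η ∈ Icc 0 T, ‖v η‖ ≤ M) (hτ : τ ∈ Icc 0 T)
    (hτ' : τ' ∈ Icc 0 T) (hξ : ξ ∈ Icc 0 T) :
    ‖singularTransform β T v τ' ξ - singularTransform β T v τ ξ‖ ≤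
      4 / (1 - 2 * β) * M * |τ' - τ| ^ (1 - 2 * β) := by
  rcases le_total τ τ' with h | h
  · rw [abs_of_nonneg (sub_nonneg.2 h)]
    exact norm_singularTransform_sub_le_of_le hβ0 hβ2 hv hM hτ hτ' hξ h
  · rw [abs_of_nonpos (sub_nonpos.2 h), neg_sub, norm_sub_rev]
    exact norm_singularTransform_sub_le_of_le hβ0 hβ2 hv hM hτ' hτ hξ h

end

end

theorem stmt2_general (T β : ℝ) (hβ : β ∈ Set.Ico (0 : ℝ) (1 / 2)) :
    ∃ ω : ℝ → ℝ, Continuous ω ∧ Monotone ω ∧ ω 0 = 0 ∧ (∀ δ, 0 ≤ ω δ) ∧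
      ∀ (k : ℕ) (v : ℝ → EuclideanSpace ℝ (Fin k)), ContinuousOn v (Set.Icc 0 T) →
        ∀ τ ∈ Set.Icc (0:ℝ) T, ∀ τ' ∈ Set.Icc (0:ℝ) T,
          ∀ ξ ∈ Set.Icc (0:ℝ) T, ∀ ξ' ∈ Set.Icc (0:ℝ) T,
            ‖(∫ η in (max τ' ξ')..T, ((η - τ') ^ (-β) * (η - ξ') ^ (-β)) • v η) -
                ∫ η in (max τ ξ)..T, ((η - τ) ^ (-β) * (η - ξ) ^ (-β)) • v η‖ ≤
              sSup ((fun η => ‖v η‖) '' Set.Icc 0 T) * ω (|τ' - τ| + |ξ' - ξ|) := by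
  obtain ⟨hβ0, hβ1⟩ := hβ
  have hβ2 : 2 * β < 1 := by linarith
  have hp : 0 < 1 - 2 * β := by linarith
  -- `max δ 0` because the real power is not monotone on negative bases
  refine ⟨fun δ => 8 / (1 - 2 * β) * max δ 0 ^ (1 - 2 * β),
    continuous_const.mul ((Real.continuous_rpow_const hp.le).comp
      (continuous_id.max continuous_const)),
    fun x y hxy => by dsimp only; gcongr, by simp [Real.zero_rpow hp.ne'],
    fun δ => by positivity, ?_⟩
  intro k v hv τ hτ τ' hτ' ξ hξ ξ' hξ'
  set M := sSup ((fun η => ‖v η‖) '' Icc 0 T)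
  have hM : ∀ η ∈ Icc 0 T, ‖v η‖ ≤ M := fun η hη =>
    le_csSup (isCompact_Icc.image_of_continuousOn hv.norm).bddAbove ⟨η, hη, rfl⟩
  have hξ_change : ‖singularTransform β T v τ' ξ' - singularTransform β T v τ' ξ‖ ≤
      4 / (1 - 2 * β) * M * |ξ' - ξ| ^ (1 - 2 * β) := by
    rw [singularTransform_comm τ' ξ', singularTransform_comm τ' ξ]
    exact norm_singularTransform_sub_le hβ0 hβ2 hv hM hξ hξ' hτ'
  have hτ_change := norm_singularTransform_sub_le hβ0 hβ2 hv hM hτ hτ' hξ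
  have hM0 : 0 ≤ M := (norm_nonneg _).trans (hM τ hτ)
  show ‖singularTransform β T v τ' ξ' - singularTransform β T v τ ξ‖ ≤
    M * (8 / (1 - 2 * β) * max (|τ' - τ| + |ξ' - ξ|) 0 ^ (1 - 2 * β))
  rw [max_eq_left (by positivity)]
  calc _ ≤ 4 / (1 - 2 * β) * M * |ξ' - ξ| ^ (1 - 2 * β) +
        4 / (1 - 2 * β) * M * |τ' - τ| ^ (1 - 2 * β) :=
        (norm_sub_le_norm_sub_add_norm_sub _ _ _).trans (add_le_add hξ_change hτ_change)
    _ ≤ 4 / (1 - 2 * β) * M * (|τ' - τ| + |ξ' - ξ|) ^ (1 - 2 * β) +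
        4 / (1 - 2 * β) * M * (|τ' - τ| + |ξ' - ξ|) ^ (1 - 2 * β) := by
        gcongr <;> linarith [abs_nonneg (τ' - τ), abs_nonneg (ξ' - ξ)]
    _ = _ := by ring

/-- Uniform continuity, with a modulus depending only on `β` and `T`, of
`v̂(τ, ξ) = ∫_{max(τ,ξ)}^T (η-τ)^{-β} (η-ξ)^{-β} v(η) dη` for continuous `v`. -/
theorem stmt2 (T β : ℝ) (hT : 0 < T) (hβ : β ∈ Set.Ico (0 : ℝ) (1 / 2)) :
    ∃ ω : ℝ → ℝ, Continuous ω ∧ Monotone ω ∧ ω 0 = 0 ∧ (∀ δ, 0 ≤ ω δ) ∧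
      ∀ (k : ℕ) (v : ℝ → EuclideanSpace ℝ (Fin k)), ContinuousOn v (Set.Icc 0 T) →
        ∀ τ ∈ Set.Icc (0:ℝ) T, ∀ τ' ∈ Set.Icc (0:ℝ) T,
          ∀ ξ ∈ Set.Icc (0:ℝ) T, ∀ ξ' ∈ Set.Icc (0:ℝ) T,
            ‖(∫ η in (max τ' ξ')..T, ((η - τ') ^ (-β) * (η - ξ') ^ (-β)) • v η) -
                ∫ η in (max τ ξ)..T, ((η - τ) ^ (-β) * (η - ξ) ^ (-β)) • v η‖ ≤
              sSup ((fun η => ‖v η‖) '' Set.Icc 0 T) * ω (|τ' - τ| + |ξ' - ξ|) :=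
  stmt2_general T β hβ
end

section
/- Let T > 0, α ∈ (0,1), n ∈ ℕ, and let x : [0,T] → ℝ^n satisfy the representation x(τ) = x(0) + (1/Γ(α)) ∫_0^τ (τ - ξ)^{α-1} f(ξ) dξ for all τ ∈ [0,T], where f : [0,T] → ℝ^n is measurable with ‖f(ξ)‖ ≤ μ for a.e. ξ. Then for any 0 ≤ t ≤ t' < T and any τ ∈ (t', T], defining z(ξ) = ∫_t^ξ f(η) dη and a(τ | t) = x(0) + (1/Γ(α)) ∫_0^t (τ - ξ)^{α-1} f(ξ) dξ, one has ‖a(τ | t') - a(τ | t) - z(t')/(Γ(α)(τ - t)^{1-α})‖ ≤ 2μ (t' - t)^{2-α} / (Γ(α) (τ - t')^{2-2α}). -/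
/-!
Write `A = τ - t'`, `B = t' - t` and `k ξ = (τ - ξ) ^ (α - 1)`. The left-hand side is
`Γ(α)⁻¹ ∫_t^{t'} (k ξ - k t) • f ξ dξ`, so everything reduces to the pointwise kernel estimate
`0 ≤ k ξ - k t ≤ A ^ (2α - 2) B ^ (1 - α)` on `[t, t']`. Since `k ξ ≤ k t'`, after dividing by
`A ^ (α - 1)` this is
`1 - (1 + r) ^ p ≤ r ^ (-p)` for `r = B / A` and `p = α - 1 ∈ [-1, 0]`, which holds because
`(1 + r) ^ p ≥ (1 + r)⁻¹`, and `1 - (1 + r)⁻¹ ≤ min r 1 ≤ r ^ (-p)`.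
Integrating gives the bound with constant `1` in place of `2`.
-/

open MeasureTheory Set intervalIntegral
open scoped Interval

namespace Real

lemma one_sub_one_add_rpow_le_rpow_neg {r p : ℝ} (hr : 0 ≤ r) (hp₁ : -1 ≤ p) (hp₀ : p ≤ 0) :
    1 - (1 + r) ^ p ≤ r ^ (-p) := by
  have h1r : 1 ≤ 1 + r := by linarith
  have hinv : (1 + r)⁻¹ ≤ (1 + r) ^ p := by
    simpa only [rpow_neg_one] using rpow_le_rpow_of_exponent_le h1r hp₁
  have hinv_le : 1 - (1 + r)⁻¹ ≤ min r 1 := by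
    have hpos : 0 < (1 + r)⁻¹ := by positivity
    refine le_min ?_ (by linarith)
    have : 1 - r ≤ (1 + r)⁻¹ := by
      rw [← one_div, le_div_iff₀ (by linarith)]
      nlinarith
    linarith
  have hmin : min r 1 ≤ r ^ (-p) := by
    rcases le_total r 1 with hr1 | hr1
    · calc min r 1 ≤ r ^ (1 : ℝ) := (min_le_left _ _).trans_eq (rpow_one r).symm
        _ ≤ r ^ (-p) := rpow_le_rpow_of_exponent_ge' hr hr1 (neg_nonneg.2 hp₀) (by linarith)
    · exact (min_le_right _ _).trans (one_le_rpow hr1 (neg_nonneg.2 hp₀))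
  linarith

lemma rpow_sub_rpow_add_le {a b p : ℝ} (ha : 0 < a) (hb : 0 ≤ b) (hp₁ : -1 ≤ p) (hp₀ : p ≤ 0) :
    a ^ p - (a + b) ^ p ≤ a ^ (2 * p) * b ^ (-p) := by
  have hr : 0 ≤ b / a := div_nonneg hb ha.le
  calc a ^ p - (a + b) ^ p = a ^ p * (1 - (1 + b / a) ^ p) := by
        rw [show a + b = a * (1 + b / a) by field_simp, mul_rpow ha.le (by positivity)]; ring
    _ ≤ a ^ p * (b / a) ^ (-p) :=
        mul_le_mul_of_nonneg_left (one_sub_one_add_rpow_le_rpow_neg hr hp₁ hp₀)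
          (rpow_nonneg ha.le p)
    _ = a ^ (2 * p) * b ^ (-p) := by
        have : a ^ p ≠ 0 := (rpow_pos_of_pos ha p).ne'
        rw [div_rpow hb ha.le, rpow_neg ha.le, two_mul, rpow_add ha]
        field_simp

end Real

section FrozenHistory

variable {E : Type*} [NormedAddCommGroup E] [NormedSpace ℝ E]

lemma rpow_sub_sub_rpow_sub_le {α t ξ t' τ : ℝ} (hα₀ : 0 ≤ α) (hα₁ : α ≤ 1) (htξ : t ≤ ξ)
    (hξt' : ξ ≤ t') (ht'τ : t' < τ) :
    (τ - ξ) ^ (α - 1) - (τ - t) ^ (α - 1) ≤ (τ - t') ^ (2 * α - 2) * (t' - t) ^ (1 - α) := by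
  have hA : 0 < τ - t' := by linarith
  have hmono : (τ - ξ) ^ (α - 1) ≤ (τ - t') ^ (α - 1) :=
    Real.rpow_le_rpow_of_nonpos hA (by linarith) (by linarith)
  have key := Real.rpow_sub_rpow_add_le hA (sub_nonneg.2 (htξ.trans hξt'))
    (p := α - 1) (by linarith) (by linarith)
  rw [show τ - t' + (t' - t) = τ - t by ring, show 2 * (α - 1) = 2 * α - 2 by ring,
    neg_sub] at key
  linarith

lemma norm_integral_rpow_sub_sub_rpow_sub_smul_le {f : ℝ → E} {μ α t t' τ : ℝ} (hα₀ : 0 ≤ α)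
    (hα₁ : α ≤ 1) (htt' : t ≤ t') (ht'τ : t' < τ)
    (hf : ∀ᵐ ξ ∂volume.restrict (Ioc t t'), ‖f ξ‖ ≤ μ) :
    ‖∫ ξ in t..t', ((τ - ξ) ^ (α - 1) - (τ - t) ^ (α - 1)) • f ξ‖ ≤
      μ * (t' - t) ^ (2 - α) * (τ - t') ^ (2 * α - 2) := by
  have hpoint : ∀ᵐ ξ, ξ ∈ Ι t t' →
      ‖((τ - ξ) ^ (α - 1) - (τ - t) ^ (α - 1)) • f ξ‖ ≤
        (τ - t') ^ (2 * α - 2) * (t' - t) ^ (1 - α) * μ := by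
    rw [uIoc_of_le htt', ← ae_restrict_iff' measurableSet_Ioc]
    filter_upwards [hf, ae_restrict_mem measurableSet_Ioc] with ξ hfξ hξ
    have hmono : (τ - t) ^ (α - 1) ≤ (τ - ξ) ^ (α - 1) :=
      Real.rpow_le_rpow_of_nonpos (by linarith [hξ.2]) (by linarith [hξ.1]) (by linarith)
    rw [norm_smul, Real.norm_of_nonneg (sub_nonneg.2 hmono)]
    exact mul_le_mul (rpow_sub_sub_rpow_sub_le hα₀ hα₁ hξ.1.le hξ.2 ht'τ) hfξ (norm_nonneg _)
      (by positivity)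
  refine (norm_integral_le_of_norm_le_const_ae hpoint).trans_eq ?_
  rw [abs_of_nonneg (sub_nonneg.2 htt'), show (2 : ℝ) - α = 1 - α + 1 by ring,
    Real.rpow_add' (sub_nonneg.2 htt') (by linarith), Real.rpow_one]
  ring

lemma integral_sub_integral_sub_smul_integral {k : ℝ → ℝ} {f : ℝ → E} {a b c : ℝ}
    (hkf_ac : IntervalIntegrable (fun ξ => k ξ • f ξ) volume a c)
    (hkf_ab : IntervalIntegrable (fun ξ => k ξ • f ξ) volume a b)
    (hf : IntervalIntegrable f volume b c) :
    (∫ ξ in a..c, k ξ • f ξ) - (∫ ξ in a..b, k ξ • f ξ) - k b • ∫ ξ in b..c, f ξ =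
      ∫ ξ in b..c, (k ξ - k b) • f ξ := by
  simp only [sub_smul]
  rw [integral_interval_sub_left hkf_ac hkf_ab, ← intervalIntegral.integral_smul]
  exact (intervalIntegral.integral_sub (hkf_ab.symm.trans hkf_ac) (hf.smul _)).symm

lemma integral_rpow_sub_smul_sub_integral_rpow_sub_smul {f : ℝ → E} {μ α t t' τ : ℝ}
    (hf : AEStronglyMeasurable f) (hbd : ∀ᵐ ξ ∂volume.restrict (Ioc 0 t'), ‖f ξ‖ ≤ μ)
    (h0t : 0 ≤ t) (htt' : t ≤ t') (ht'τ : t' < τ) :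
    (∫ ξ in 0..t', (τ - ξ) ^ (α - 1) • f ξ) - (∫ ξ in 0..t, (τ - ξ) ^ (α - 1) • f ξ) -
        (τ - t) ^ (α - 1) • ∫ ξ in t..t', f ξ =
      ∫ ξ in t..t', ((τ - ξ) ^ (α - 1) - (τ - t) ^ (α - 1)) • f ξ := by
  have hf_int : IntervalIntegrable f volume 0 t' :=
    (intervalIntegrable_iff_integrableOn_Ioc_of_le (h0t.trans htt')).2
      (IntegrableOn.of_bound measure_Ioc_lt_top hf.restrict μ hbd)
  have hkf_int : IntervalIntegrable (fun ξ => (τ - ξ) ^ (α - 1) • f ξ) volume 0 t' := by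
    refine hf_int.continuousOn_smul (ContinuousOn.rpow_const (by fun_prop) fun ξ hξ => ?_)
    rw [uIcc_of_le (h0t.trans htt')] at hξ
    exact Or.inl (by linarith [hξ.2])
  have ht_mem : t ∈ [[0, t']] := mem_uIcc_of_le h0t htt'
  exact integral_sub_integral_sub_smul_integral (k := fun ξ => (τ - ξ) ^ (α - 1))
    hkf_int (hkf_int.mono_set (uIcc_subset_uIcc_left ht_mem))
    (hf_int.mono_set (uIcc_subset_uIcc_right ht_mem))

end FrozenHistory

theorem stmt3_general (T α : ℝ) (hα : α ∈ Set.Ioo (0 : ℝ) 1) (n : ℕ)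
    (x f : ℝ → EuclideanSpace ℝ (Fin n)) (μ : ℝ) (hμ : 0 ≤ μ)
    (hf_meas : Measurable f)
    (hf_bd : ∀ᵐ ξ ∂(volume.restrict (Set.Icc (0:ℝ) T)), ‖f ξ‖ ≤ μ)
    (t t' : ℝ) (h0t : 0 ≤ t) (htt' : t ≤ t') (ht'T : t' < T)
    (τ : ℝ) (hτ : τ ∈ Set.Ioc t' T) :
    ‖(x 0 + (1 / Real.Gamma α) • ∫ ξ in (0:ℝ)..t', ((τ - ξ) ^ (α - 1)) • f ξ) -
        (x 0 + (1 / Real.Gamma α) • ∫ ξ in (0:ℝ)..t, ((τ - ξ) ^ (α - 1)) • f ξ) -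
        (1 / (Real.Gamma α * (τ - t) ^ (1 - α))) • ∫ η in t..t', f η‖ ≤
      2 * μ * (t' - t) ^ (2 - α) / (Real.Gamma α * (τ - t') ^ (2 - 2 * α)) := by
  obtain ⟨hα₀, hα₁⟩ := hα
  obtain ⟨ht'τ, -⟩ := hτ
  have hbd : ∀ᵐ ξ ∂volume.restrict (Ioc 0 t'), ‖f ξ‖ ≤ μ :=
    ae_restrict_of_ae_restrict_of_subset
      (Ioc_subset_Icc_self.trans (Icc_subset_Icc_right ht'T.le)) hf_bd
  have hincr := integral_rpow_sub_smul_sub_integral_rpow_sub_smul (α := α)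
    hf_meas.aestronglyMeasurable hbd h0t htt' ht'τ
  have hcoef : 1 / (Real.Gamma α * (τ - t) ^ (1 - α)) = 1 / Real.Gamma α * (τ - t) ^ (α - 1) := by
    rw [show α - 1 = -(1 - α) by ring, Real.rpow_neg (by linarith), one_div, mul_inv,
      one_div]
  calc _ = 1 / Real.Gamma α *
        ‖∫ ξ in t..t', ((τ - ξ) ^ (α - 1) - (τ - t) ^ (α - 1)) • f ξ‖ := by
        rw [← hincr, hcoef, mul_smul, ← norm_smul_of_nonneg (by positivity)]
        congr 1
        module
    _ ≤ 1 / Real.Gamma α * (μ * (t' - t) ^ (2 - α) * (τ - t') ^ (2 * α - 2)) := by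
        gcongr
        exact norm_integral_rpow_sub_sub_rpow_sub_smul_le hα₀.le hα₁.le htt' ht'τ
          (ae_restrict_of_ae_restrict_of_subset (Ioc_subset_Ioc_left h0t) hbd)
    _ = μ * (t' - t) ^ (2 - α) / (Real.Gamma α * (τ - t') ^ (2 - 2 * α)) := by
        rw [show 2 * α - 2 = -(2 - 2 * α) by ring, Real.rpow_neg (by linarith)]
        ring
    _ ≤ 2 * (μ * (t' - t) ^ (2 - α) / (Real.Gamma α * (τ - t') ^ (2 - 2 * α))) :=
        le_mul_of_one_le_left (by positivity) one_le_two
    _ = _ := by ring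

/-- First-order expansion, with singular remainder, of the frozen-history map
`t ↦ a(τ | t)` for a fractional absolutely continuous function `x`. -/
theorem stmt3 (T α : ℝ) (hT : 0 < T) (hα : α ∈ Set.Ioo (0 : ℝ) 1) (n : ℕ)
    (x f : ℝ → EuclideanSpace ℝ (Fin n)) (μ : ℝ) (hμ : 0 ≤ μ)
    (hf_meas : Measurable f)
    (hf_bd : ∀ᵐ ξ ∂(volume.restrict (Set.Icc (0:ℝ) T)), ‖f ξ‖ ≤ μ)
    (hx : ∀ τ ∈ Set.Icc (0:ℝ) T,
      x τ = x 0 + (1 / Real.Gamma α) • ∫ ξ in (0:ℝ)..τ, ((τ - ξ) ^ (α - 1)) • f ξ)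
    (t t' : ℝ) (h0t : 0 ≤ t) (htt' : t ≤ t') (ht'T : t' < T)
    (τ : ℝ) (hτ : τ ∈ Set.Ioc t' T) :
    ‖(x 0 + (1 / Real.Gamma α) • ∫ ξ in (0:ℝ)..t', ((τ - ξ) ^ (α - 1)) • f ξ) -
        (x 0 + (1 / Real.Gamma α) • ∫ ξ in (0:ℝ)..t, ((τ - ξ) ^ (α - 1)) • f ξ) -
        (1 / (Real.Gamma α * (τ - t) ^ (1 - α))) • ∫ η in t..t', f η‖ ≤
      2 * μ * (t' - t) ^ (2 - α) / (Real.Gamma α * (τ - t') ^ (2 - 2 * α)) :=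
  stmt3_general T α hα n x f μ hμ hf_meas hf_bd t t' h0t htt' ht'T τ hτ
end

section
/- Let T > 0, α ∈ (1/2, 1), n ∈ ℕ, and suppose a continuous function y : [0,T] → [0,∞) satisfies y(τ) ≤ c + (μ/Γ(α)) ∫_0^τ (τ - ξ)^{2α - 2} y(ξ) dξ for all τ ∈ [0,T], where c, μ ≥ 0 are constants. Then y(τ) ≤ c · E_{2α-1}(μ' τ^{2α-1}) for all τ ∈ [0,T], where E_{2α-1} is the Mittag-Leffler function with parameter 2α - 1 and μ' = μ Γ(2α-1)/Γ(α). -/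
/-!
Iterating the inequality `m` times bounds `y` by `c` times the `m`-th partial sum of the
Mittag-Leffler series `∑ (ν τ^β)^j / Γ(βj + 1)`, `β = 2α - 1`, `ν = μ Γ(β) / Γ(α)`, plus
`max y` times its `m`-th term. This works because the Riemann-Liouville integral of the
`j`-th term is the `(j+1)`-st one, which is the Beta integral
`∫₀^τ (τ - ξ)^{β-1} ξ^{βj} dξ = Γ(β) Γ(βj + 1) / Γ(βj + β + 1) · τ^{β(j+1)}`.
The series converges since `Γ(s + 1) ≥ A^s e^{-(A+1)}` for every `A > 0`, so the remainder
term tends to `0`.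
-/

open MeasureTheory Set Filter Real

theorem rpow_mul_exp_neg_le_Gamma_add_one {s A : ℝ} (hs : 0 ≤ s) (hA : 0 < A) :
    A ^ s * exp (-(A + 1)) ≤ Gamma (s + 1) := by
  have hsub : Icc A (A + 1) ⊆ Ioi 0 := fun x hx => hA.trans_le hx.1
  have hint : IntegrableOn (fun x => exp (-x) * x ^ s) (Icc A (A + 1)) := by
    exact ((continuous_exp.comp continuous_neg).mul
      (Real.continuous_rpow_const hs)).continuousOn.integrableOn_Icc
  rw [Gamma_eq_integral (by linarith), add_sub_cancel_right]
  calc A ^ s * exp (-(A + 1))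
      = ∫ _ in Icc A (A + 1), exp (-(A + 1)) * A ^ s := by
        simp [mul_comm]
    _ ≤ ∫ x in Icc A (A + 1), exp (-x) * x ^ s :=
        setIntegral_mono_on (integrableOn_const (by simp)) hint measurableSet_Icc
          fun x hx => mul_le_mul (exp_le_exp.2 (by linarith [hx.2]))
            (Real.rpow_le_rpow hA.le hx.1 hs) (by positivity) (by positivity)
    _ ≤ ∫ x in Ioi 0, exp (-x) * x ^ s := by
        refine setIntegral_mono_set ?_ ?_ (Eventually.of_forall hsub)
        · simpa using GammaIntegral_convergent (s := s + 1) (by linarith)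
        · filter_upwards [ae_restrict_mem measurableSet_Ioi] with x hx
          exact mul_nonneg (exp_pos _).le (Real.rpow_nonneg (le_of_lt hx) _)

theorem integral_rpow_mul_one_sub_rpow {p q : ℝ} (hp : 0 < p) (hq : 0 < q) :
    ∫ x in (0:ℝ)..1, x ^ (p - 1) * (1 - x) ^ (q - 1) =
      Gamma p * Gamma q / Gamma (p + q) := by
  have hbeta : Complex.betaIntegral p q =
      ((∫ x in (0:ℝ)..1, x ^ (p - 1) * (1 - x) ^ (q - 1) : ℝ) : ℂ) := by
    rw [Complex.betaIntegral, ← intervalIntegral.integral_ofReal]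
    refine intervalIntegral.integral_congr fun x hx => ?_
    rw [uIcc_of_le zero_le_one] at hx
    simp only [Complex.ofReal_mul, Complex.ofReal_cpow hx.1,
      Complex.ofReal_cpow (sub_nonneg.2 hx.2)]
    push_cast
    ring
  have h := Complex.Gamma_mul_Gamma_eq_betaIntegral (s := p) (t := q)
    (by simpa using hp) (by simpa using hq)
  rw [hbeta, ← Complex.ofReal_add, Complex.Gamma_ofReal, Complex.Gamma_ofReal,
    Complex.Gamma_ofReal, ← Complex.ofReal_mul, ← Complex.ofReal_mul, Complex.ofReal_inj] at h
  rw [h, mul_div_cancel_left₀ _ (Gamma_pos_of_pos (add_pos hp hq)).ne']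

theorem integral_sub_rpow_mul_rpow {β γ τ : ℝ} (hβ : 0 < β) (hγ : 0 ≤ γ) (hτ : 0 ≤ τ) :
    ∫ ξ in (0:ℝ)..τ, (τ - ξ) ^ (β - 1) * ξ ^ γ =
      Gamma β * Gamma (γ + 1) / Gamma (β + γ + 1) * τ ^ (β + γ) := by
  rcases hτ.eq_or_lt with rfl | hτ
  · simp [Real.zero_rpow (by linarith : β + γ ≠ 0)]
  have hsubst := intervalIntegral.integral_comp_mul_left
    (fun ξ => (τ - ξ) ^ (β - 1) * ξ ^ γ) hτ.ne' (a := 0) (b := 1)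
  simp only [mul_zero, mul_one, smul_eq_mul] at hsubst
  rw [eq_inv_mul_iff_mul_eq₀ hτ.ne'] at hsubst
  have hscaled : ∫ x in (0:ℝ)..1, (τ - τ * x) ^ (β - 1) * (τ * x) ^ γ =
      τ ^ (β - 1) * τ ^ γ * ∫ x in (0:ℝ)..1, x ^ (γ + 1 - 1) * (1 - x) ^ (β - 1) := by
    rw [← intervalIntegral.integral_const_mul]
    refine intervalIntegral.integral_congr fun x hx => ?_
    rw [uIcc_of_le zero_le_one] at hx
    rw [show τ - τ * x = τ * (1 - x) by ring, Real.mul_rpow hτ.le (sub_nonneg.2 hx.2),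
      Real.mul_rpow hτ.le hx.1, add_sub_cancel_right]
    ring
  have hpow : τ * (τ ^ (β - 1) * τ ^ γ) = τ ^ (β + γ) := by
    rw [← Real.rpow_add hτ, ← Real.rpow_one_add' hτ.le (by linarith)]
    ring_nf
  rw [← hsubst, hscaled, integral_rpow_mul_one_sub_rpow (by linarith) hβ, ← mul_assoc, hpow,
    show γ + 1 + β = β + γ + 1 by ring]
  ring

noncomputable def mittagLefflerTerm (β z : ℝ) (j : ℕ) : ℝ := z ^ j / Gamma (β * j + 1)

lemma Gamma_mul_natCast_add_one_pos {β : ℝ} (hβ : 0 ≤ β) (j : ℕ) : 0 < Gamma (β * j + 1) :=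
  Gamma_pos_of_pos (by positivity)

theorem summable_mittagLefflerTerm {β : ℝ} (hβ : 0 < β) (z : ℝ) :
    Summable (mittagLefflerTerm β z) := by
  set r := |z|
  -- `Γ(βj + 1) ≥ A^{βj} e^{-(A+1)}` with `A^β = 2r + 1` makes the terms geometric
  set A := (2 * r + 1) ^ β⁻¹
  have hA : 0 < A := Real.rpow_pos_of_pos (by positivity) _
  have hAj (j : ℕ) : A ^ (β * j) = (2 * r + 1) ^ j := by
    rw [Real.rpow_mul hA.le, Real.rpow_inv_rpow (by positivity) hβ.ne', Real.rpow_natCast]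
  refine Summable.of_norm_bounded
    ((summable_geometric_of_lt_one (r := r / (2 * r + 1)) (by positivity)
      ((div_lt_one (by positivity)).2 (by linarith [abs_nonneg z]))).mul_left
        (exp (A + 1))) fun j => ?_
  have hΓ := rpow_mul_exp_neg_le_Gamma_add_one (s := β * j) (by positivity) hA
  rw [hAj] at hΓ
  rw [mittagLefflerTerm, norm_div, norm_pow, Real.norm_eq_abs,
    Real.norm_of_nonneg (Gamma_mul_natCast_add_one_pos hβ.le j).le, div_pow]
  calc r ^ j / Gamma (β * j + 1)
      ≤ r ^ j / ((2 * r + 1) ^ j * exp (-(A + 1))) :=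
        div_le_div_of_nonneg_left (by positivity) (by positivity) hΓ
    _ = exp (A + 1) * (r ^ j / (2 * r + 1) ^ j) := by
        rw [exp_neg]; field_simp

@[simp]
lemma mittagLefflerTerm_zero (β z : ℝ) : mittagLefflerTerm β z 0 = 1 := by
  simp [mittagLefflerTerm]

lemma mittagLefflerTerm_nonneg {β z : ℝ} (hβ : 0 ≤ β) (hz : 0 ≤ z) (j : ℕ) :
    0 ≤ mittagLefflerTerm β z j :=
  div_nonneg (pow_nonneg hz j) (Gamma_mul_natCast_add_one_pos hβ j).le

lemma continuous_mittagLefflerTerm_mul_rpow {β : ℝ} (hβ : 0 ≤ β) (ν : ℝ) (j : ℕ) :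
    Continuous fun τ => mittagLefflerTerm β (ν * τ ^ β) j :=
  ((continuous_const.mul (Real.continuous_rpow_const hβ)).pow j).div_const _

lemma mittagLefflerTerm_mul_rpow {β ν τ : ℝ} (hτ : 0 ≤ τ) (j : ℕ) :
    mittagLefflerTerm β (ν * τ ^ β) j = ν ^ j / Gamma (β * j + 1) * τ ^ (β * j) := by
  rw [mittagLefflerTerm, mul_pow, ← Real.rpow_natCast (τ ^ β), ← Real.rpow_mul hτ]
  ring

theorem mul_integral_sub_rpow_mul_mittagLefflerTerm {β τ : ℝ} (hβ : 0 < β) (hτ : 0 ≤ τ)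
    (k : ℝ) (j : ℕ) :
    k * ∫ ξ in (0:ℝ)..τ, (τ - ξ) ^ (β - 1) * mittagLefflerTerm β (k * Gamma β * ξ ^ β) j =
      mittagLefflerTerm β (k * Gamma β * τ ^ β) (j + 1) := by
  have hterm : EqOn (fun ξ => (τ - ξ) ^ (β - 1) * mittagLefflerTerm β (k * Gamma β * ξ ^ β) j)
      (fun ξ => (k * Gamma β) ^ j / Gamma (β * j + 1) *
        ((τ - ξ) ^ (β - 1) * ξ ^ (β * j))) (uIcc 0 τ) := fun ξ hξ => by
    rw [uIcc_of_le hτ] at hξ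
    simp only [mittagLefflerTerm_mul_rpow hξ.1]
    ring
  rw [intervalIntegral.integral_congr hterm, intervalIntegral.integral_const_mul,
    integral_sub_rpow_mul_rpow hβ (by positivity) hτ, mittagLefflerTerm_mul_rpow hτ,
    show β + β * j = β * (j + 1 : ℕ) by push_cast; ring, pow_succ]
  field_simp [(Gamma_mul_natCast_add_one_pos hβ.le j).ne']

section VolterraKernel

variable {β τ : ℝ}

lemma intervalIntegrable_sub_rpow_mul (hβ : 0 < β) (hτ : 0 ≤ τ) {f : ℝ → ℝ}
    (hf : ContinuousOn f (Icc 0 τ)) :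
    IntervalIntegrable (fun ξ => (τ - ξ) ^ (β - 1) * f ξ) volume 0 τ := by
  have hkernel : IntervalIntegrable (fun ξ => (τ - ξ) ^ (β - 1)) volume 0 τ := by
    simpa using ((intervalIntegral.intervalIntegrable_rpow' (a := 0) (b := τ)
      (by linarith : -1 < β - 1)).comp_sub_left τ).symm
  exact hkernel.mul_continuousOn (by rwa [uIcc_of_le hτ])

lemma integral_sub_rpow_mul_mono (hβ : 0 < β) (hτ : 0 ≤ τ) {f g : ℝ → ℝ}
    (hf : ContinuousOn f (Icc 0 τ)) (hg : ContinuousOn g (Icc 0 τ))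
    (hfg : ∀ ξ ∈ Icc 0 τ, f ξ ≤ g ξ) :
    ∫ ξ in (0:ℝ)..τ, (τ - ξ) ^ (β - 1) * f ξ ≤ ∫ ξ in (0:ℝ)..τ, (τ - ξ) ^ (β - 1) * g ξ :=
  intervalIntegral.integral_mono_on hτ (intervalIntegrable_sub_rpow_mul hβ hτ hf)
    (intervalIntegrable_sub_rpow_mul hβ hτ hg) fun ξ hξ =>
      mul_le_mul_of_nonneg_left (hfg ξ hξ) (Real.rpow_nonneg (sub_nonneg.2 hξ.2) _)

theorem mul_integral_sub_rpow_mul_partialSum (hβ : 0 < β) (hτ : 0 ≤ τ) (k c M : ℝ) (m : ℕ) :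
    k * ∫ ξ in (0:ℝ)..τ, (τ - ξ) ^ (β - 1) *
        (c * ∑ j ∈ Finset.range m, mittagLefflerTerm β (k * Gamma β * ξ ^ β) j +
          M * mittagLefflerTerm β (k * Gamma β * ξ ^ β) m) =
      c * ∑ j ∈ Finset.range m, mittagLefflerTerm β (k * Gamma β * τ ^ β) (j + 1) +
        M * mittagLefflerTerm β (k * Gamma β * τ ^ β) (m + 1) := by
  set E := fun (j : ℕ) (ξ : ℝ) => mittagLefflerTerm β (k * Gamma β * ξ ^ β) j
  have hE (j : ℕ) : IntervalIntegrable (fun ξ => (τ - ξ) ^ (β - 1) * E j ξ) volume 0 τ :=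
    intervalIntegrable_sub_rpow_mul hβ hτ
      (continuous_mittagLefflerTerm_mul_rpow hβ.le _ j).continuousOn
  have hsplit : (fun ξ => (τ - ξ) ^ (β - 1) * (c * ∑ j ∈ Finset.range m, E j ξ + M * E m ξ)) =
      fun ξ => c * ∑ j ∈ Finset.range m, (τ - ξ) ^ (β - 1) * E j ξ +
        M * ((τ - ξ) ^ (β - 1) * E m ξ) := by
    ext ξ
    rw [mul_add, mul_left_comm, Finset.mul_sum, mul_left_comm]
  have hsum : IntervalIntegrable (fun ξ => ∑ j ∈ Finset.range m, (τ - ξ) ^ (β - 1) * E j ξ)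
      volume 0 τ := by
    simpa only [Finset.sum_fn] using IntervalIntegrable.sum _ fun j _ => hE j
  rw [hsplit, intervalIntegral.integral_add (hsum.const_mul c) ((hE m).const_mul M),
    intervalIntegral.integral_const_mul, intervalIntegral.integral_const_mul,
    intervalIntegral.integral_finsetSum fun j _ => hE j,
    mul_add, mul_left_comm, Finset.mul_sum, mul_left_comm,
    mul_integral_sub_rpow_mul_mittagLefflerTerm hβ hτ]
  simp only [E, mul_integral_sub_rpow_mul_mittagLefflerTerm hβ hτ]

end VolterraKernel

section Gronwall

variable {β k c T : ℝ} {y : ℝ → ℝ}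

theorem le_partialSum_of_le_add_integral (hβ : 0 < β) (hk : 0 ≤ k)
    (hycont : ContinuousOn y (Icc 0 T))
    (hy : ∀ τ ∈ Icc 0 T, y τ ≤ c + k * ∫ ξ in (0:ℝ)..τ, (τ - ξ) ^ (β - 1) * y ξ)
    {M : ℝ} (hM : ∀ τ ∈ Icc 0 T, y τ ≤ M) (m : ℕ) :
    ∀ τ ∈ Icc 0 T, y τ ≤
      c * ∑ j ∈ Finset.range m, mittagLefflerTerm β (k * Gamma β * τ ^ β) j +
        M * mittagLefflerTerm β (k * Gamma β * τ ^ β) m := by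
  induction m with
  | zero => simpa using hM
  | succ m ih =>
    intro τ hτ
    have hsub : Icc 0 τ ⊆ Icc 0 T := Icc_subset_Icc_right hτ.2
    have hE := continuous_mittagLefflerTerm_mul_rpow hβ.le (k * Gamma β)
    have hbound : ContinuousOn (fun ξ => c * ∑ j ∈ Finset.range m,
        mittagLefflerTerm β (k * Gamma β * ξ ^ β) j +
          M * mittagLefflerTerm β (k * Gamma β * ξ ^ β) m) (Icc 0 τ) :=
      ((continuous_const.mul (continuous_finsetSum _ fun j _ => hE j)).add
        (continuous_const.mul (hE m))).continuousOn
    calc y τ ≤ c + k * ∫ ξ in (0:ℝ)..τ, (τ - ξ) ^ (β - 1) * y ξ := hy τ hτ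
      _ ≤ c + k * ∫ ξ in (0:ℝ)..τ, (τ - ξ) ^ (β - 1) *
            (c * ∑ j ∈ Finset.range m, mittagLefflerTerm β (k * Gamma β * ξ ^ β) j +
              M * mittagLefflerTerm β (k * Gamma β * ξ ^ β) m) := by
          gcongr
          exact integral_sub_rpow_mul_mono hβ hτ.1 (hycont.mono hsub) hbound
            fun ξ hξ => ih ξ (hsub hξ)
      _ = _ := by
          rw [mul_integral_sub_rpow_mul_partialSum hβ hτ.1, Finset.sum_range_succ',
            mittagLefflerTerm_zero]
          ring

theorem le_mul_tsum_mittagLefflerTerm_of_le_add_integral (hβ : 0 < β) (hk : 0 ≤ k) (hc : 0 ≤ c)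
    (hycont : ContinuousOn y (Icc 0 T))
    (hy : ∀ τ ∈ Icc 0 T, y τ ≤ c + k * ∫ ξ in (0:ℝ)..τ, (τ - ξ) ^ (β - 1) * y ξ) :
    ∀ τ ∈ Icc 0 T, y τ ≤ c * ∑' j, mittagLefflerTerm β (k * Gamma β * τ ^ β) j := by
  obtain ⟨M, hM⟩ := isCompact_Icc.bddAbove_image hycont
  intro τ hτ
  have hz : 0 ≤ k * Gamma β * τ ^ β :=
    mul_nonneg (mul_nonneg hk (Gamma_pos_of_pos hβ).le) (Real.rpow_nonneg hτ.1 _)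
  have hsum := summable_mittagLefflerTerm hβ (k * Gamma β * τ ^ β)
  have hlim := (hsum.tendsto_atTop_zero.const_mul M).const_add
    (c * ∑' j, mittagLefflerTerm β (k * Gamma β * τ ^ β) j)
  rw [mul_zero, add_zero] at hlim
  refine ge_of_tendsto' hlim fun m => ?_
  calc y τ ≤ _ := le_partialSum_of_le_add_integral hβ hk hycont hy
        (fun t ht => hM (mem_image_of_mem y ht)) m τ hτ
    _ ≤ _ := by
        gcongr
        exact hsum.sum_le_tsum _ fun j _ => mittagLefflerTerm_nonneg hβ.le hz j

end Gronwall

theorem stmt10_general (T α : ℝ) (hα : α ∈ Set.Ioo (1/2 : ℝ) 1)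
    (y : ℝ → ℝ) (hycont : ContinuousOn y (Set.Icc 0 T))
    (c μ : ℝ) (hc : 0 ≤ c) (hμ : 0 ≤ μ)
    (hy : ∀ τ ∈ Set.Icc (0:ℝ) T,
      y τ ≤ c + (μ / Real.Gamma α) * ∫ ξ in (0:ℝ)..τ, ((τ - ξ) ^ (2 * α - 2)) * y ξ) :
    ∀ τ ∈ Set.Icc (0:ℝ) T,
      y τ ≤ c * ∑' j : ℕ,
        ((μ * Real.Gamma (2 * α - 1) / Real.Gamma α) * τ ^ (2 * α - 1)) ^ j /
          Real.Gamma ((2 * α - 1) * j + 1) := by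
  have hk : 0 ≤ μ / Real.Gamma α :=
    div_nonneg hμ (Real.Gamma_pos_of_pos (by linarith [hα.1])).le
  rw [show 2 * α - 2 = 2 * α - 1 - 1 by ring] at hy
  simpa only [mittagLefflerTerm, div_mul_eq_mul_div] using
    le_mul_tsum_mittagLefflerTerm_of_le_add_integral (by linarith [hα.1]) hk hc hycont hy

/-- Fractional Gronwall inequality with singular kernel `(τ-ξ)^{2α-2}`:
`y(τ) ≤ c E_{2α-1}(μ' τ^{2α-1})` with `μ' = μ Γ(2α-1)/Γ(α)`, where
`E_β(z) = ∑_{j≥0} z^j / Γ(βj+1)` is the Mittag-Leffler function. -/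
theorem stmt10 (T α : ℝ) (hT : 0 < T) (hα : α ∈ Set.Ioo (1/2 : ℝ) 1) (n : ℕ)
    (y : ℝ → ℝ) (hycont : ContinuousOn y (Set.Icc 0 T))
    (hynonneg : ∀ τ ∈ Set.Icc (0:ℝ) T, 0 ≤ y τ)
    (c μ : ℝ) (hc : 0 ≤ c) (hμ : 0 ≤ μ)
    (hy : ∀ τ ∈ Set.Icc (0:ℝ) T,
      y τ ≤ c + (μ / Real.Gamma α) * ∫ ξ in (0:ℝ)..τ, ((τ - ξ) ^ (2 * α - 2)) * y ξ) :
    ∀ τ ∈ Set.Icc (0:ℝ) T,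
      y τ ≤ c * ∑' j : ℕ,
        ((μ * Real.Gamma (2 * α - 1) / Real.Gamma α) * τ ^ (2 * α - 1)) ^ j /
          Real.Gamma ((2 * α - 1) * j + 1) :=
  stmt10_general T α hα y hycont c μ hc hμ hy
end

section
/- Let β ∈ [0,1), T > 0, 0 ≤ t < ϑ < T, let W : Ω → ℝ^{k×k} be continuous on Ω = {(τ,ξ) ∈ [0,T]² : τ ≥ ξ} with bound μ_W, and let v : [t,T] → ℝ^k be continuous with bound μ_v and modulus of continuity ω_v. Then for all t' ∈ (t, ϑ] and all τ ∈ (t', T], ‖∫_t^{t'} (τ-ξ)^{-β} W(τ,ξ) v(ξ) dξ − (t'-t)(τ-t)^{-β} W(τ,t) v(t)‖ ≤ [μ_v ω_W(t'-t)(t'-t) + μ_W ω_v(t'-t)(t'-t)] (τ-t')^{-β} + μ_W μ_v (t'-t)^{β+1} (τ-t')^{-2β}, where ω_W is a modulus of continuity for W. -/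
open MeasureTheory Set

lemma aux_rpow_subadd (x y p : ℝ) (hx : 0 ≤ x) (hy : 0 ≤ y) (hp : 0 ≤ p) (hp1 : p ≤ 1) :
    (x + y) ^ p ≤ x ^ p + y ^ p := by
  lift x to NNReal using hx
  lift y to NNReal using hy
  rw [← NNReal.coe_add, ← NNReal.coe_rpow, ← NNReal.coe_rpow, ← NNReal.coe_rpow,
    ← NNReal.coe_add, NNReal.coe_le_coe]
  exact NNReal.rpow_add_le_add_rpow x y hp hp1

lemma aux_ker_bound (β a b c d : ℝ) (hβ0 : 0 ≤ β) (hβ1 : β ≤ 1) (hc : 0 < c)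
    (hca : c ≤ a) (hab : a ≤ b) (hd : b - a ≤ d) :
    a ^ (-β) - b ^ (-β) ≤ d ^ β * c ^ (-(2 * β)) := by
  have ha : 0 < a := lt_of_lt_of_le hc hca
  have hb : 0 < b := lt_of_lt_of_le ha hab
  have hapow : (0:ℝ) < a ^ β := Real.rpow_pos_of_pos ha β
  have hbpow : (0:ℝ) < b ^ β := Real.rpow_pos_of_pos hb β
  have hid : a ^ (-β) - b ^ (-β) = a ^ (-β) * b ^ (-β) * (b ^ β - a ^ β) := by
    rw [Real.rpow_neg ha.le, Real.rpow_neg hb.le]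
    field_simp
  rw [hid]
  have h1 : b ^ β - a ^ β ≤ d ^ β := by
    have hba : 0 ≤ b - a := by linarith
    have : b ^ β ≤ a ^ β + (b - a) ^ β := by
      have := aux_rpow_subadd a (b - a) β ha.le hba hβ0 hβ1
      simpa using this
    have h2 : (b - a) ^ β ≤ d ^ β := Real.rpow_le_rpow hba hd hβ0
    linarith
  have h2 : a ^ (-β) ≤ c ^ (-β) :=
    Real.rpow_le_rpow_of_nonpos hc hca (by linarith)
  have h3 : b ^ (-β) ≤ c ^ (-β) :=
    Real.rpow_le_rpow_of_nonpos hc (le_trans hca hab) (by linarith)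
  have hcc : c ^ (-β) * c ^ (-β) = c ^ (-(2 * β)) := by
    rw [← Real.rpow_add hc]; ring_nf
  calc a ^ (-β) * b ^ (-β) * (b ^ β - a ^ β)
      ≤ c ^ (-β) * c ^ (-β) * d ^ β := by
        apply mul_le_mul
        · exact mul_le_mul h2 h3 (Real.rpow_nonneg hb.le _) (Real.rpow_nonneg hc.le _)
        · exact h1
        · linarith [Real.rpow_le_rpow ha.le hab hβ0]
        · positivity
    _ = d ^ β * c ^ (-(2 * β)) := by rw [hcc]; ring

/-- First-order approximation of `∫_t^{t'} (τ-ξ)^{-β} W(τ,ξ) v(ξ) dξ` by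
`(t'-t)(τ-t)^{-β} W(τ,t) v(t)`, with quantitative singular error bound. -/
theorem stmt18 (T β : ℝ) (hT : 0 < T) (hβ : β ∈ Set.Ico (0:ℝ) 1)
    (t ϑ : ℝ) (ht : 0 ≤ t) (htϑ : t < ϑ) (hϑT : ϑ < T) (k : ℕ)
    (W : ℝ → ℝ → EuclideanSpace ℝ (Fin k) →L[ℝ] EuclideanSpace ℝ (Fin k))
    (hWcont : ContinuousOn (fun q : ℝ × ℝ => W q.1 q.2)
      {q : ℝ × ℝ | 0 ≤ q.2 ∧ q.2 ≤ q.1 ∧ q.1 ≤ T})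
    (μW : ℝ) (hμW : ∀ τ ξ : ℝ, 0 ≤ ξ → ξ ≤ τ → τ ≤ T → ‖W τ ξ‖ ≤ μW)
    (ωW : ℝ → ℝ) (hωWmono : Monotone ωW) (hωW0 : ωW 0 = 0) (hωWpos : ∀ δ, 0 ≤ ωW δ)
    (hωW : ∀ τ ξ τ' ξ' : ℝ, 0 ≤ ξ → ξ ≤ τ → τ ≤ T → 0 ≤ ξ' → ξ' ≤ τ' → τ' ≤ T →
      ‖W τ' ξ' - W τ ξ‖ ≤ ωW (|τ' - τ| + |ξ' - ξ|))
    (v : ℝ → EuclideanSpace ℝ (Fin k)) (hvcont : ContinuousOn v (Set.Icc t T))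
    (μv : ℝ) (hμv : ∀ s ∈ Set.Icc t T, ‖v s‖ ≤ μv)
    (ωv : ℝ → ℝ) (hωvmono : Monotone ωv) (hωv0 : ωv 0 = 0) (hωvpos : ∀ δ, 0 ≤ ωv δ)
    (hωv : ∀ s ∈ Set.Icc t T, ∀ s' ∈ Set.Icc t T, ‖v s' - v s‖ ≤ ωv (|s' - s|)) :
    ∀ t' ∈ Set.Ioc t ϑ, ∀ τ ∈ Set.Ioc t' T,
      ‖(∫ ξ in t..t', ((τ - ξ) ^ (-β)) • W τ ξ (v ξ)) -
          ((t' - t) * (τ - t) ^ (-β)) • W τ t (v t)‖ ≤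
        (μv * ωW (t' - t) * (t' - t) + μW * ωv (t' - t) * (t' - t)) *
            (τ - t') ^ (-β) +
          μW * μv * (t' - t) ^ (β + 1) * (τ - t') ^ (-(2 * β)) := by
  obtain ⟨hβ0, hβ1⟩ := hβ
  rintro t' ⟨htt', ht'ϑ⟩ τ ⟨ht'τ, hτT⟩
  have hτt' : 0 < τ - t' := by linarith
  have hδ : 0 < t' - t := by linarith
  have htτ : t < τ := lt_trans htt' ht'τ
  have hμW' : 0 ≤ μW := le_trans (norm_nonneg _) (hμW τ t ht htτ.le hτT)
  have hμv' : 0 ≤ μv := le_trans (norm_nonneg _) (hμv t ⟨le_refl _, by linarith⟩)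
  set g := ((τ - t) ^ (-β)) • (W τ t) (v t) with hg
  set C := (μv * ωW (t' - t) + μW * ωv (t' - t)) * (τ - t') ^ (-β) +
      μW * μv * (t' - t) ^ β * (τ - t') ^ (-(2 * β)) with hC
  -- continuity of the integrand on [t, t']
  have hsub : Set.Icc t t' ⊆ Set.Icc t T := Set.Icc_subset_Icc le_rfl (by linarith)
  have hfW : ContinuousOn (fun ξ => (W τ ξ) (v ξ)) (Set.Icc t t') := by
    have h1 : ContinuousOn (fun ξ : ℝ => W τ ξ) (Set.Icc t t') := by
      have hmap : Set.MapsTo (fun ξ : ℝ => ((τ, ξ) : ℝ × ℝ)) (Set.Icc t t')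
          {q : ℝ × ℝ | 0 ≤ q.2 ∧ q.2 ≤ q.1 ∧ q.1 ≤ T} := by
        intro ξ hξ
        exact ⟨le_trans ht hξ.1, by simp; constructor <;> [linarith [hξ.2]; linarith]⟩
      exact hWcont.comp ((continuous_const.prodMk continuous_id).continuousOn) hmap
    exact h1.clm_apply (hvcont.mono hsub)
  have hfs : ContinuousOn (fun ξ : ℝ => (τ - ξ) ^ (-β)) (Set.Icc t t') := by
    apply ContinuousOn.rpow_const (continuousOn_const.sub continuousOn_id)
    intro ξ hξ
    left
    have h2 : ξ ≤ t' := hξ.2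
    have h3 : 0 < τ - ξ := by linarith
    exact h3.ne'
  have hf : ContinuousOn (fun ξ => ((τ - ξ) ^ (-β)) • (W τ ξ) (v ξ)) (Set.Icc t t') :=
    hfs.smul hfW
  have hint : IntervalIntegrable (fun ξ => ((τ - ξ) ^ (-β)) • (W τ ξ) (v ξ))
      volume t t' := by
    apply ContinuousOn.intervalIntegrable
    rw [Set.uIcc_of_le (by linarith : t ≤ t')]
    exact hf
  -- pointwise bound
  have key : ∀ ξ ∈ Set.Ioc t t',
      ‖((τ - ξ) ^ (-β)) • (W τ ξ) (v ξ) - g‖ ≤ C := by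
    intro ξ hξ
    have hξ1 : t < ξ := hξ.1
    have hξ2 : ξ ≤ t' := hξ.2
    have hτξ : 0 < τ - ξ := by linarith
    have hξT : ξ ≤ T := by linarith
    have hξτ : ξ ≤ τ := by linarith
    have hξ0 : 0 ≤ ξ := le_trans ht hξ1.le
    have hsplit : ((τ - ξ) ^ (-β)) • (W τ ξ) (v ξ) - g =
        ((τ - ξ) ^ (-β)) • ((W τ ξ) (v ξ) - (W τ t) (v t)) +
          (((τ - ξ) ^ (-β)) - ((τ - t) ^ (-β))) • (W τ t) (v t) := by
      rw [hg]; module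
    rw [hsplit]
    have hA : ‖(W τ ξ) (v ξ) - (W τ t) (v t)‖ ≤ μv * ωW (t' - t) + μW * ωv (t' - t) := by
      have hdecomp : (W τ ξ) (v ξ) - (W τ t) (v t) =
          (W τ ξ - W τ t) (v ξ) + (W τ t) (v ξ - v t) := by
        simp [ContinuousLinearMap.sub_apply, map_sub]
      rw [hdecomp]
      have h1 : ‖(W τ ξ - W τ t) (v ξ)‖ ≤ ωW (t' - t) * μv := by
        calc ‖(W τ ξ - W τ t) (v ξ)‖ ≤ ‖W τ ξ - W τ t‖ * ‖v ξ‖ :=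
              ContinuousLinearMap.le_opNorm _ _
          _ ≤ ωW (t' - t) * μv := by
              apply mul_le_mul _ (hμv ξ ⟨hξ1.le, hξT⟩) (norm_nonneg _) (hωWpos _)
              have := hωW τ t τ ξ ht htτ.le hτT hξ0 hξτ hτT
              calc ‖W τ ξ - W τ t‖ ≤ ωW (|τ - τ| + |ξ - t|) := this
                _ ≤ ωW (t' - t) := by
                    apply hωWmono
                    rw [sub_self, abs_zero, zero_add, abs_of_nonneg (by linarith)]
                    linarith
      have h2 : ‖(W τ t) (v ξ - v t)‖ ≤ μW * ωv (t' - t) := by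
        calc ‖(W τ t) (v ξ - v t)‖ ≤ ‖W τ t‖ * ‖v ξ - v t‖ :=
              ContinuousLinearMap.le_opNorm _ _
          _ ≤ μW * ωv (t' - t) := by
              apply mul_le_mul (hμW τ t ht htτ.le hτT) _ (norm_nonneg _) hμW'
              have h := hωv t ⟨le_rfl, by linarith⟩ ξ ⟨hξ1.le, hξT⟩
              calc ‖v ξ - v t‖ ≤ ωv (|ξ - t|) := h
                _ ≤ ωv (t' - t) := by
                    apply hωvmono
                    rw [abs_of_nonneg (by linarith)]; linarith
      calc ‖(W τ ξ - W τ t) (v ξ) + (W τ t) (v ξ - v t)‖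
          ≤ ‖(W τ ξ - W τ t) (v ξ)‖ + ‖(W τ t) (v ξ - v t)‖ := norm_add_le _ _
        _ ≤ μv * ωW (t' - t) + μW * ωv (t' - t) := by
            rw [mul_comm μv]; exact add_le_add h1 h2
    have hs1 : (τ - ξ) ^ (-β) ≤ (τ - t') ^ (-β) :=
      Real.rpow_le_rpow_of_nonpos hτt' (by linarith) (by linarith)
    have hs1' : 0 ≤ (τ - ξ) ^ (-β) := Real.rpow_nonneg hτξ.le _
    have hs2 : |(τ - ξ) ^ (-β) - (τ - t) ^ (-β)| ≤
        (t' - t) ^ β * (τ - t') ^ (-(2 * β)) := by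
      have hmono : (τ - t) ^ (-β) ≤ (τ - ξ) ^ (-β) :=
        Real.rpow_le_rpow_of_nonpos hτξ (by linarith) (by linarith)
      rw [abs_of_nonneg (by linarith)]
      exact aux_ker_bound β (τ - ξ) (τ - t) (τ - t') (t' - t) hβ0 hβ1.le hτt'
        (by linarith) (by linarith) (by linarith)
    have hB : ‖(W τ t) (v t)‖ ≤ μW * μv := by
      calc ‖(W τ t) (v t)‖ ≤ ‖W τ t‖ * ‖v t‖ := ContinuousLinearMap.le_opNorm _ _
        _ ≤ μW * μv := mul_le_mul (hμW τ t ht htτ.le hτT)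
            (hμv t ⟨le_rfl, by linarith⟩) (norm_nonneg _) hμW'
    calc ‖((τ - ξ) ^ (-β)) • ((W τ ξ) (v ξ) - (W τ t) (v t)) +
            (((τ - ξ) ^ (-β)) - ((τ - t) ^ (-β))) • (W τ t) (v t)‖
        ≤ ((τ - ξ) ^ (-β)) * ‖(W τ ξ) (v ξ) - (W τ t) (v t)‖ +
            |((τ - ξ) ^ (-β)) - ((τ - t) ^ (-β))| * ‖(W τ t) (v t)‖ := by
          refine le_trans (norm_add_le _ _) ?_
          rw [norm_smul, norm_smul, Real.norm_eq_abs, Real.norm_eq_abs,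
            abs_of_nonneg hs1']
      _ ≤ (τ - t') ^ (-β) * (μv * ωW (t' - t) + μW * ωv (t' - t)) +
            ((t' - t) ^ β * (τ - t') ^ (-(2 * β))) * (μW * μv) := by
          exact add_le_add
            (mul_le_mul hs1 hA (norm_nonneg _) (Real.rpow_nonneg hτt'.le _))
            (mul_le_mul hs2 hB (norm_nonneg _) (by positivity))
      _ = C := by rw [hC]; ring
  -- conclude
  have hconst : ((t' - t) * (τ - t) ^ (-β)) • (W τ t) (v t) = ∫ _ in t..t', g := by
    rw [intervalIntegral.integral_const, hg, smul_smul]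
  rw [hconst, ← intervalIntegral.integral_sub hint intervalIntegrable_const]
  have hbound : ‖∫ ξ in t..t', (((τ - ξ) ^ (-β)) • (W τ ξ) (v ξ) - g)‖ ≤
      C * |t' - t| := by
    apply intervalIntegral.norm_integral_le_of_norm_le_const
    intro ξ hξ
    rw [Set.uIoc_of_le (by linarith : t ≤ t')] at hξ
    exact key ξ hξ
  refine le_trans hbound (le_of_eq ?_)
  rw [abs_of_nonneg hδ.le, hC]
  have hpow : (t' - t) ^ (β + 1) = (t' - t) ^ β * (t' - t) := by
    rw [Real.rpow_add_one hδ.ne' β]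
  rw [hpow]; ring
end
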